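/- arXiv:0905.3665 — 2 statements merged into one kernel-verified Lean document; each statement's English description precedes it below -/
import Mathlib

section
/- For any fixed a ∈ C, the assignment σ_i ↦ a·g_i, τ_i ↦ p_i extends to a monoid homomorphism δ_a from the singular braid monoid SB_n to the multiplicative monoid of the Yokonuma–Hecke algebra Y_{d,n}(u). -/
open Finset

/-- The element `e_i = (1/d) * sum_{m=0}^{d-1} t_i^m t_{i+1}^{-m}` of the
Yokonuma--Hecke algebra; since `t_j^d = 1` we write `t_{i+1}^{-m} = t_{i+1}^{d-m}`. -/
noncomputable def eElt {A : Type*} [Ring A] [Algebra ℂ A] (d : ℕ) (t : ℕ → A) (i : ℕ) : A :=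
  (d : ℂ)⁻¹ • ∑ m ∈ Finset.range d, t i ^ m * t (i + 1) ^ (d - m)

/-- The element `p_i := e_i (1 - g_i)`. -/
noncomputable def pElt {A : Type*} [Ring A] [Algebra ℂ A] (d : ℕ) (t g : ℕ → A) (i : ℕ) : A :=
  eElt d t i * (1 - g i)

/-- Generators of the singular braid monoid: `sig i = σ_i`, `sigInv i = σ_i⁻¹`,
`tau i = τ_i`. -/
inductive SBGen : Type
  | sig : ℕ → SBGen
  | sigInv : ℕ → SBGen
  | tau : ℕ → SBGen

open SBGen in
/-- Defining relations of the singular braid monoid `SB_n`. -/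
inductive sbRel (n : ℕ) : FreeMonoid SBGen → FreeMonoid SBGen → Prop
  | invR (i : ℕ) (h1 : 1 ≤ i) (h2 : i ≤ n - 1) :
      sbRel n (FreeMonoid.of (sig i) * FreeMonoid.of (sigInv i)) 1
  | invL (i : ℕ) (h1 : 1 ≤ i) (h2 : i ≤ n - 1) :
      sbRel n (FreeMonoid.of (sigInv i) * FreeMonoid.of (sig i)) 1
  | commSS (i j : ℕ) (h1 : 1 ≤ i) (h2 : i ≤ n - 1) (h3 : 1 ≤ j) (h4 : j ≤ n - 1)
      (hfar : i + 1 < j ∨ j + 1 < i) :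
      sbRel n (FreeMonoid.of (sig i) * FreeMonoid.of (sig j))
        (FreeMonoid.of (sig j) * FreeMonoid.of (sig i))
  | commST (i j : ℕ) (h1 : 1 ≤ i) (h2 : i ≤ n - 1) (h3 : 1 ≤ j) (h4 : j ≤ n - 1)
      (hfar : i + 1 < j ∨ j + 1 < i) :
      sbRel n (FreeMonoid.of (sig i) * FreeMonoid.of (tau j))
        (FreeMonoid.of (tau j) * FreeMonoid.of (sig i))
  | commTT (i j : ℕ) (h1 : 1 ≤ i) (h2 : i ≤ n - 1) (h3 : 1 ≤ j) (h4 : j ≤ n - 1)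
      (hfar : i + 1 < j ∨ j + 1 < i) :
      sbRel n (FreeMonoid.of (tau i) * FreeMonoid.of (tau j))
        (FreeMonoid.of (tau j) * FreeMonoid.of (tau i))
  | commSTi (i : ℕ) (h1 : 1 ≤ i) (h2 : i ≤ n - 1) :
      sbRel n (FreeMonoid.of (sig i) * FreeMonoid.of (tau i))
        (FreeMonoid.of (tau i) * FreeMonoid.of (sig i))
  | braid (i j : ℕ) (h1 : 1 ≤ i) (h2 : i ≤ n - 1) (h3 : 1 ≤ j) (h4 : j ≤ n - 1)
      (hadj : j = i + 1 ∨ i = j + 1) :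
      sbRel n (FreeMonoid.of (sig i) * FreeMonoid.of (sig j) * FreeMonoid.of (sig i))
        (FreeMonoid.of (sig j) * FreeMonoid.of (sig i) * FreeMonoid.of (sig j))
  | braidT (i j : ℕ) (h1 : 1 ≤ i) (h2 : i ≤ n - 1) (h3 : 1 ≤ j) (h4 : j ≤ n - 1)
      (hadj : j = i + 1 ∨ i = j + 1) :
      sbRel n (FreeMonoid.of (sig i) * FreeMonoid.of (sig j) * FreeMonoid.of (tau i))
        (FreeMonoid.of (tau j) * FreeMonoid.of (sig i) * FreeMonoid.of (sig j))

/-- The singular braid monoid `SB_n` as a presented monoid. -/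
def SBMonoid (n : ℕ) := (conGen (sbRel n)).Quotient

noncomputable instance (n : ℕ) : Monoid (SBMonoid n) :=
  inferInstanceAs (Monoid (conGen (sbRel n)).Quotient)


/-!
Since `SB_n` is a presented monoid, it suffices to check that `σ_i ↦ a g_i`,
`σ_i⁻¹ ↦ a⁻¹ g_i⁻¹`, `τ_i ↦ p_i` respect its defining relations. Everything reduces to three
facts about `e_i`: it is idempotent, it commutes with `g_i`, and conjugation by `g_i g_j`
(for `|i - j| = 1`) sends it to `e_j`. Writing `w = t_i t_{i+1}^{d-1}`, `d e_i` is the geometric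
sum `∑_{m<d} w^m` with `w^d = 1`, which is absorbed by `w` and hence squares to `d` times
itself. Since `g_i` swaps `t_i` and `t_{i+1}` under conjugation, it fixes `e_i`, the sum being
symmetric in `t_i, t_{i+1}`. Idempotency of `e_i` and the quadratic relation then give the
explicit inverse `g_i⁻¹ = g_i + (1 - u⁻¹) e_i (1 - g_i)`.
-/

section Presentation

variable {M : Type*} [MonoidWithZero M]

noncomputable def SBGen.image (s p : ℕ → M) : SBGen → M
  | SBGen.sig i => s i
  | SBGen.sigInv i => Ring.inverse (s i)
  | SBGen.tau i => p i

theorem SBMonoid.exists_hom (n : ℕ) (s p : ℕ → M)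
    (hunit : ∀ i, 1 ≤ i → i ≤ n - 1 → IsUnit (s i))
    (hss : ∀ i j, 1 ≤ i → i ≤ n - 1 → 1 ≤ j → j ≤ n - 1 → (i + 1 < j ∨ j + 1 < i) →
      Commute (s i) (s j))
    (hsp : ∀ i j, 1 ≤ i → i ≤ n - 1 → 1 ≤ j → j ≤ n - 1 → (i + 1 < j ∨ j + 1 < i) →
      Commute (s i) (p j))
    (hpp : ∀ i j, 1 ≤ i → i ≤ n - 1 → 1 ≤ j → j ≤ n - 1 → (i + 1 < j ∨ j + 1 < i) →
      Commute (p i) (p j))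
    (hsp_self : ∀ i, 1 ≤ i → i ≤ n - 1 → Commute (s i) (p i))
    (hbraid : ∀ i j, 1 ≤ i → i ≤ n - 1 → 1 ≤ j → j ≤ n - 1 → (j = i + 1 ∨ i = j + 1) →
      s i * s j * s i = s j * s i * s j)
    (hbraid_p : ∀ i j, 1 ≤ i → i ≤ n - 1 → 1 ≤ j → j ≤ n - 1 → (j = i + 1 ∨ i = j + 1) →
      s i * s j * p i = p j * s i * s j) :
    ∃ δ : SBMonoid n →* M, ∀ i, 1 ≤ i → i ≤ n - 1 →
      δ ((conGen (sbRel n)).mk' (FreeMonoid.of (SBGen.sig i))) = s i ∧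
      δ ((conGen (sbRel n)).mk' (FreeMonoid.of (SBGen.tau i))) = p i := by
  have hker : conGen (sbRel n) ≤ Con.ker (FreeMonoid.lift (SBGen.image s p)) := by
    refine Con.conGen_le.mpr fun x y hxy => ?_
    rw [Con.ker_rel]
    cases hxy <;>
      simp only [map_mul, map_one, FreeMonoid.lift_eval_of, SBGen.image]
    case invR i h1 h2 => exact Ring.mul_inverse_cancel _ (hunit i h1 h2)
    case invL i h1 h2 => exact Ring.inverse_mul_cancel _ (hunit i h1 h2)
    case commSS i j h1 h2 h3 h4 hfar => exact hss i j h1 h2 h3 h4 hfar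
    case commST i j h1 h2 h3 h4 hfar => exact hsp i j h1 h2 h3 h4 hfar
    case commTT i j h1 h2 h3 h4 hfar => exact hpp i j h1 h2 h3 h4 hfar
    case commSTi i h1 h2 => exact hsp_self i h1 h2
    case braid i j h1 h2 h3 h4 hadj => exact hbraid i j h1 h2 h3 h4 hadj
    case braidT i j h1 h2 h3 h4 hadj => exact hbraid_p i j h1 h2 h3 h4 hadj
  exact ⟨(conGen (sbRel n)).lift _ hker, fun i _ _ =>
    ⟨Con.lift_mk' hker _, Con.lift_mk' hker _⟩⟩

end Presentation

section SumPowMulPowSub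

variable {R : Type*} [Ring R] {d : ℕ}

theorem geom_sum_mul_of_pow_eq_one {w : R} (hw : w ^ d = 1) (k : ℕ) :
    (∑ m ∈ range d, w ^ m) * w ^ k = ∑ m ∈ range d, w ^ m := by
  have hshift : (∑ m ∈ range d, w ^ m) * w = ∑ m ∈ range d, w ^ m := by
    have := geom_sum_mul w d
    rwa [hw, sub_self, mul_sub, mul_one, sub_eq_zero] at this
  induction k with
  | zero => rw [pow_zero, mul_one]
  | succ k ih => rw [pow_succ, ← mul_assoc, ih, hshift]

theorem geom_sum_mul_self_of_pow_eq_one {w : R} (hw : w ^ d = 1) :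
    (∑ m ∈ range d, w ^ m) * (∑ m ∈ range d, w ^ m) = d • ∑ m ∈ range d, w ^ m := by
  simp only [mul_sum, geom_sum_mul_of_pow_eq_one hw, sum_const, card_range]

theorem Commute.pow_mul_pow_sub_eq_pow {x y : R} (hxy : Commute x y) (hy : y ^ d = 1) {m : ℕ}
    (hm : m ≤ d) : x ^ m * y ^ (d - m) = (x * y ^ (d - 1)) ^ m := by
  rw [(hxy.pow_right (d - 1)).mul_pow, ← pow_mul]
  rcases m with _ | m
  · simp [hy]
  obtain ⟨k, rfl⟩ := Nat.exists_eq_add_of_le hm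
  rw [show m + 1 + k - 1 = m + k by omega, show m + 1 + k - (m + 1) = k by omega,
    show (m + k) * (m + 1) = k + (m + 1 + k) * m by ring, pow_add y, pow_mul, hy, one_pow, mul_one]

theorem Commute.sum_pow_mul_pow_sub_mul_self {x y : R} (hxy : Commute x y) (hx : x ^ d = 1)
    (hy : y ^ d = 1) :
    (∑ m ∈ range d, x ^ m * y ^ (d - m)) * (∑ m ∈ range d, x ^ m * y ^ (d - m)) =
      d • ∑ m ∈ range d, x ^ m * y ^ (d - m) := by
  have hgeom : ∑ m ∈ range d, x ^ m * y ^ (d - m) = ∑ m ∈ range d, (x * y ^ (d - 1)) ^ m :=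
    sum_congr rfl fun m hm => hxy.pow_mul_pow_sub_eq_pow hy (mem_range.mp hm).le
  have hw : (x * y ^ (d - 1)) ^ d = 1 := by
    rw [← hxy.pow_mul_pow_sub_eq_pow hy le_rfl, hx, Nat.sub_self, pow_zero, one_mul]
  rw [hgeom, geom_sum_mul_self_of_pow_eq_one hw]

theorem Commute.sum_pow_mul_pow_sub_comm {x y : R} (hxy : Commute x y) (hx : x ^ d = 1)
    (hy : y ^ d = 1) :
    ∑ m ∈ range d, y ^ m * x ^ (d - m) = ∑ m ∈ range d, x ^ m * y ^ (d - m) := by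
  set f : ℕ → R := fun k => x ^ k * y ^ (d - k)
  have hends : f d = f 0 := by simp only [f, hx, hy, Nat.sub_self, Nat.sub_zero, pow_zero]
  calc ∑ m ∈ range d, y ^ m * x ^ (d - m)
      = ∑ m ∈ range d, f (d - 1 - m + 1) := sum_congr rfl fun m hm => by
        have hm := mem_range.mp hm
        simp only [f, show d - 1 - m + 1 = d - m by omega, Nat.sub_sub_self hm.le]
        exact ((hxy.pow_pow _ _).symm).eq
    _ = ∑ m ∈ range d, f (m + 1) := sum_range_reflect (fun m => f (m + 1)) d
    _ = ∑ m ∈ range d, f m := by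
        have h := (sum_range_succ f d).symm.trans (sum_range_succ' f d)
        rw [hends, add_left_inj] at h
        exact h.symm

theorem SemiconjBy.sum_pow_mul_pow_sub {c x y x' y' : R} (hx : SemiconjBy c x x')
    (hy : SemiconjBy c y y') :
    SemiconjBy c (∑ m ∈ range d, x ^ m * y ^ (d - m)) (∑ m ∈ range d, x' ^ m * y' ^ (d - m)) := by
  rw [SemiconjBy, mul_sum, sum_mul]
  exact sum_congr rfl fun m _ => ((hx.pow_right m).mul_right (hy.pow_right (d - m))).eq

end SumPowMulPowSub

section GeneratorRelations

variable {M : Type*} [Monoid M] {n : ℕ} {g t : ℕ → M} {i : ℕ}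

theorem commute_g_t_of_ne
    (htg : ∀ i j, 1 ≤ i → i ≤ n - 1 → 1 ≤ j → j ≤ n →
      t j * g i = g i * t (Equiv.swap i (i + 1) j))
    (hi : 1 ≤ i) (hin : i ≤ n - 1) {k : ℕ} (hk : 1 ≤ k) (hkn : k ≤ n) (hki : k ≠ i)
    (hki' : k ≠ i + 1) : Commute (g i) (t k) := by
  have h := htg i k hi hin hk hkn
  rw [Equiv.swap_apply_of_ne_of_ne hki hki'] at h
  exact h.symm

theorem semiconjBy_g_t_self
    (htg : ∀ i j, 1 ≤ i → i ≤ n - 1 → 1 ≤ j → j ≤ n →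
      t j * g i = g i * t (Equiv.swap i (i + 1) j))
    (hi : 1 ≤ i) (hin : i ≤ n - 1) : SemiconjBy (g i) (t i) (t (i + 1)) := by
  have h := htg i (i + 1) hi hin (by omega) (by omega)
  rw [Equiv.swap_apply_right] at h
  exact h.symm

theorem semiconjBy_g_t_succ
    (htg : ∀ i j, 1 ≤ i → i ≤ n - 1 → 1 ≤ j → j ≤ n →
      t j * g i = g i * t (Equiv.swap i (i + 1) j))
    (hi : 1 ≤ i) (hin : i ≤ n - 1) : SemiconjBy (g i) (t (i + 1)) (t i) := by
  have h := htg i i hi hin hi (by omega)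
  rw [Equiv.swap_apply_left] at h
  exact h.symm

end GeneratorRelations

section YokonumaHecke

variable {A : Type*} [Ring A] [Algebra ℂ A] {n d : ℕ} {g t : ℕ → A} {i j : ℕ}

theorem semiconjBy_eElt {c : A} (h : SemiconjBy c (t i) (t j))
    (h' : SemiconjBy c (t (i + 1)) (t (j + 1))) : SemiconjBy c (eElt d t i) (eElt d t j) :=
  (h.sum_pow_mul_pow_sub h').smul_right _

theorem semiconjBy_pElt {c : A} (he : SemiconjBy c (eElt d t i) (eElt d t j))
    (hg : SemiconjBy c (g i) (g j)) : SemiconjBy c (pElt d t g i) (pElt d t g j) :=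
  he.mul_right ((SemiconjBy.one_right c).sub_right hg)

theorem commute_eElt_of_swap {c : A} (h : SemiconjBy c (t i) (t (i + 1)))
    (h' : SemiconjBy c (t (i + 1)) (t i)) (hc : Commute (t i) (t (i + 1)))
    (hx : t i ^ d = 1) (hy : t (i + 1) ^ d = 1) : Commute c (eElt d t i) := by
  have hsemi := (h.sum_pow_mul_pow_sub h' (d := d)).smul_right (d : ℂ)⁻¹
  rwa [hc.sum_pow_mul_pow_sub_comm hx hy] at hsemi

theorem isIdempotentElem_eElt (hd : d ≠ 0) (hc : Commute (t i) (t (i + 1)))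
    (hx : t i ^ d = 1) (hy : t (i + 1) ^ d = 1) : IsIdempotentElem (eElt d t i) := by
  rw [IsIdempotentElem, eElt, smul_mul_smul, hc.sum_pow_mul_pow_sub_mul_self hx hy,
    ← Nat.cast_smul_eq_nsmul ℂ, smul_smul]
  congr 1
  field_simp

theorem isUnit_of_sq_eq {u : ℂ} (hu : u ≠ 0) {E G : A} (hE : IsIdempotentElem E)
    (hGE : Commute G E) (hq : G ^ 2 = 1 + (u - 1) • E - (u - 1) • (E * G)) : IsUnit G := by
  set G' := G + (1 - u⁻¹) • (E * (1 - G))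
  have hEG2 : E * G ^ 2 = E + (u - 1) • E - (u - 1) • (E * G) := by
    rw [hq, mul_sub, mul_add, mul_one, mul_smul_comm, mul_smul_comm, hE.eq, ← mul_assoc, hE.eq]
  have hGEG : G * (E * (1 - G)) = E * G - E * G ^ 2 := by
    rw [← mul_assoc, hGE.eq, mul_assoc, mul_sub, mul_one, mul_sub, sq]
  have hright : G * G' = 1 := by
    rw [mul_add, mul_smul_comm, hGEG, hEG2, ← sq, hq]
    match_scalars <;> field_simp <;> ring
  have hcomm : Commute G G' := (Commute.refl G).add_right
    ((hGE.mul_right ((Commute.one_right G).sub_right (Commute.refl G))).smul_right _)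
  exact ⟨⟨G, G', hright, hcomm.eq ▸ hright⟩, rfl⟩

theorem commute_g_eElt_of_far
    (htg : ∀ i j, 1 ≤ i → i ≤ n - 1 → 1 ≤ j → j ≤ n →
      t j * g i = g i * t (Equiv.swap i (i + 1) j))
    (hi : 1 ≤ i) (hin : i ≤ n - 1) (hj : 1 ≤ j) (hjn : j ≤ n - 1) (hfar : i + 1 < j ∨ j + 1 < i) :
    Commute (g i) (eElt d t j) :=
  semiconjBy_eElt (commute_g_t_of_ne htg hi hin hj (by omega) (by omega) (by omega))
    (commute_g_t_of_ne htg hi hin (by omega) (by omega) (by omega) (by omega))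

theorem commute_g_eElt_self
    (htt : ∀ i j, 1 ≤ i → i ≤ n → 1 ≤ j → j ≤ n → t i * t j = t j * t i)
    (htg : ∀ i j, 1 ≤ i → i ≤ n - 1 → 1 ≤ j → j ≤ n →
      t j * g i = g i * t (Equiv.swap i (i + 1) j))
    (htd : ∀ j, 1 ≤ j → j ≤ n → t j ^ d = 1) (hi : 1 ≤ i) (hin : i ≤ n - 1) :
    Commute (g i) (eElt d t i) :=
  commute_eElt_of_swap (semiconjBy_g_t_self htg hi hin) (semiconjBy_g_t_succ htg hi hin)
    (htt i (i + 1) hi (by omega) (by omega) (by omega)) (htd i hi (by omega))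
    (htd (i + 1) (by omega) (by omega))

theorem commute_eElt_eElt
    (htt : ∀ i j, 1 ≤ i → i ≤ n → 1 ≤ j → j ≤ n → t i * t j = t j * t i)
    (hi : 1 ≤ i) (hin : i ≤ n - 1) (hj : 1 ≤ j) (hjn : j ≤ n - 1) :
    Commute (eElt d t i) (eElt d t j) := by
  have hte : ∀ k, 1 ≤ k → k ≤ n → Commute (t k) (eElt d t j) := fun k hk hkn =>
    semiconjBy_eElt (htt k j hk hkn hj (by omega)) (htt k (j + 1) hk hkn (by omega) (by omega))
  exact (semiconjBy_eElt (hte i hi (by omega)).symm (hte (i + 1) (by omega) (by omega)).symm).symm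

theorem semiconjBy_g_mul_g_eElt
    (htg : ∀ i j, 1 ≤ i → i ≤ n - 1 → 1 ≤ j → j ≤ n →
      t j * g i = g i * t (Equiv.swap i (i + 1) j))
    (hi : 1 ≤ i) (hin : i ≤ n - 1) (hj : 1 ≤ j) (hjn : j ≤ n - 1) (hadj : j = i + 1 ∨ i = j + 1) :
    SemiconjBy (g i * g j) (eElt d t i) (eElt d t j) := by
  rcases hadj with rfl | rfl
  · exact semiconjBy_eElt
      ((semiconjBy_g_t_self htg hi hin).mul_left
        (commute_g_t_of_ne htg hj hjn hi (by omega) (by omega) (by omega)))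
      (SemiconjBy.mul_left
        (commute_g_t_of_ne htg hi hin (by omega) (by omega) (by omega) (by omega))
        (semiconjBy_g_t_self htg hj hjn))
  · exact semiconjBy_eElt
      (SemiconjBy.mul_left (commute_g_t_of_ne htg hi hin hj (by omega) (by omega) (by omega))
        (semiconjBy_g_t_succ htg hj hjn))
      ((semiconjBy_g_t_succ htg hi hin).mul_left
        (commute_g_t_of_ne htg hj hjn (by omega) (by omega) (by omega) (by omega)))

theorem isUnit_g (hd : 0 < d) {u : ℂ} (hu : u ≠ 0)
    (htt : ∀ i j, 1 ≤ i → i ≤ n → 1 ≤ j → j ≤ n → t i * t j = t j * t i)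
    (htg : ∀ i j, 1 ≤ i → i ≤ n - 1 → 1 ≤ j → j ≤ n →
      t j * g i = g i * t (Equiv.swap i (i + 1) j))
    (htd : ∀ j, 1 ≤ j → j ≤ n → t j ^ d = 1)
    (hquad : ∀ i, 1 ≤ i → i ≤ n - 1 →
      g i ^ 2 = 1 + (u - 1) • eElt d t i - (u - 1) • (eElt d t i * g i))
    (hi : 1 ≤ i) (hin : i ≤ n - 1) : IsUnit (g i) :=
  isUnit_of_sq_eq hu
    (isIdempotentElem_eElt hd.ne' (htt i (i + 1) hi (by omega) (by omega) (by omega))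
      (htd i hi (by omega)) (htd (i + 1) (by omega) (by omega)))
    (commute_g_eElt_self htt htg htd hi hin) (hquad i hi hin)

theorem commute_g_pElt_of_far
    (hgcomm : ∀ i j, 1 ≤ i → i ≤ n - 1 → 1 ≤ j → j ≤ n - 1 → (i + 1 < j ∨ j + 1 < i) →
      g i * g j = g j * g i)
    (htg : ∀ i j, 1 ≤ i → i ≤ n - 1 → 1 ≤ j → j ≤ n →
      t j * g i = g i * t (Equiv.swap i (i + 1) j))
    (hi : 1 ≤ i) (hin : i ≤ n - 1) (hj : 1 ≤ j) (hjn : j ≤ n - 1) (hfar : i + 1 < j ∨ j + 1 < i) :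
    Commute (g i) (pElt d t g j) :=
  semiconjBy_pElt (commute_g_eElt_of_far htg hi hin hj hjn hfar) (hgcomm i j hi hin hj hjn hfar)

theorem commute_g_pElt_self
    (htt : ∀ i j, 1 ≤ i → i ≤ n → 1 ≤ j → j ≤ n → t i * t j = t j * t i)
    (htg : ∀ i j, 1 ≤ i → i ≤ n - 1 → 1 ≤ j → j ≤ n →
      t j * g i = g i * t (Equiv.swap i (i + 1) j))
    (htd : ∀ j, 1 ≤ j → j ≤ n → t j ^ d = 1) (hi : 1 ≤ i) (hin : i ≤ n - 1) :
    Commute (g i) (pElt d t g i) :=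
  semiconjBy_pElt (commute_g_eElt_self htt htg htd hi hin) (Commute.refl (g i))

theorem commute_pElt_pElt_of_far
    (hgcomm : ∀ i j, 1 ≤ i → i ≤ n - 1 → 1 ≤ j → j ≤ n - 1 → (i + 1 < j ∨ j + 1 < i) →
      g i * g j = g j * g i)
    (htt : ∀ i j, 1 ≤ i → i ≤ n → 1 ≤ j → j ≤ n → t i * t j = t j * t i)
    (htg : ∀ i j, 1 ≤ i → i ≤ n - 1 → 1 ≤ j → j ≤ n →
      t j * g i = g i * t (Equiv.swap i (i + 1) j))
    (hi : 1 ≤ i) (hin : i ≤ n - 1) (hj : 1 ≤ j) (hjn : j ≤ n - 1) (hfar : i + 1 < j ∨ j + 1 < i) :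
    Commute (pElt d t g i) (pElt d t g j) :=
  Commute.mul_left
    (semiconjBy_pElt (commute_eElt_eElt htt hi hin hj hjn)
      (commute_g_eElt_of_far htg hj hjn hi hin hfar.symm).symm)
    ((Commute.one_left _).sub_left (commute_g_pElt_of_far hgcomm htg hi hin hj hjn hfar))

theorem g_mul_g_mul_pElt
    (hbraid : ∀ i j, 1 ≤ i → i ≤ n - 1 → 1 ≤ j → j ≤ n - 1 → (j = i + 1 ∨ i = j + 1) →
      g i * g j * g i = g j * g i * g j)
    (htg : ∀ i j, 1 ≤ i → i ≤ n - 1 → 1 ≤ j → j ≤ n →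
      t j * g i = g i * t (Equiv.swap i (i + 1) j))
    (hi : 1 ≤ i) (hin : i ≤ n - 1) (hj : 1 ≤ j) (hjn : j ≤ n - 1) (hadj : j = i + 1 ∨ i = j + 1) :
    g i * g j * pElt d t g i = pElt d t g j * g i * g j := by
  have hg : SemiconjBy (g i * g j) (g i) (g j) := by
    rw [SemiconjBy, ← mul_assoc]
    exact hbraid i j hi hin hj hjn hadj
  rw [(semiconjBy_pElt (semiconjBy_g_mul_g_eElt htg hi hin hj hjn hadj) hg).eq, mul_assoc]

end YokonumaHecke

theorem yh_delta_hom_general {A : Type*} [Ring A] [Algebra ℂ A] (d n : ℕ) (u : ℂ) (a : ℂ) (ha : a ≠ 0)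
    (hd : 0 < d) (hu0 : u ≠ 0) (g t : ℕ → A)
    (hgcomm : ∀ i j, 1 ≤ i → i ≤ n - 1 → 1 ≤ j → j ≤ n - 1 → (i + 1 < j ∨ j + 1 < i) →
      g i * g j = g j * g i)
    (hbraid : ∀ i j, 1 ≤ i → i ≤ n - 1 → 1 ≤ j → j ≤ n - 1 → (j = i + 1 ∨ i = j + 1) →
      g i * g j * g i = g j * g i * g j)
    (htt : ∀ i j, 1 ≤ i → i ≤ n → 1 ≤ j → j ≤ n → t i * t j = t j * t i)
    (htg : ∀ i j, 1 ≤ i → i ≤ n - 1 → 1 ≤ j → j ≤ n →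
      t j * g i = g i * t (Equiv.swap i (i + 1) j))
    (htd : ∀ j, 1 ≤ j → j ≤ n → t j ^ d = 1)
    (hquad : ∀ i, 1 ≤ i → i ≤ n - 1 →
      g i ^ 2 = 1 + (u - 1) • eElt d t i - (u - 1) • (eElt d t i * g i)) :
    ∃ δ : SBMonoid n →* A,
      ∀ i, 1 ≤ i → i ≤ n - 1 →
        δ ((conGen (sbRel n)).mk' (FreeMonoid.of (SBGen.sig i))) = a • g i ∧
        δ ((conGen (sbRel n)).mk' (FreeMonoid.of (SBGen.tau i))) = pElt d t g i := by
  refine SBMonoid.exists_hom n (fun i => a • g i) (pElt d t g) ?_ ?_ ?_ ?_ ?_ ?_ ?_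
  · intro i hi hin
    rw [Algebra.smul_def]
    exact (ha.isUnit.map (algebraMap ℂ A)).mul (isUnit_g hd hu0 htt htg htd hquad hi hin)
  · exact fun i j hi hin hj hjn hfar =>
      ((Commute.smul_left (hgcomm i j hi hin hj hjn hfar) a).smul_right a)
  · exact fun i j hi hin hj hjn hfar =>
      (commute_g_pElt_of_far hgcomm htg hi hin hj hjn hfar).smul_left a
  · exact fun i j hi hin hj hjn hfar => commute_pElt_pElt_of_far hgcomm htt htg hi hin hj hjn hfar
  · exact fun i hi hin => (commute_g_pElt_self htt htg htd hi hin).smul_left a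
  · intro i j hi hin hj hjn hadj
    simp only [smul_mul_assoc, mul_smul_comm, smul_smul, hbraid i j hi hin hj hjn hadj]
  · intro i j hi hin hj hjn hadj
    simp only [smul_mul_assoc, mul_smul_comm, smul_smul,
      g_mul_g_mul_pElt hbraid htg hi hin hj hjn hadj]

theorem yh_delta_hom {A : Type*} [Ring A] [Algebra ℂ A] (d n : ℕ) (u : ℂ) (a : ℂ) (ha : a ≠ 0)
    (hd : 0 < d) (hu0 : u ≠ 0) (hu1 : u ≠ 1) (g t : ℕ → A)
    (hgcomm : ∀ i j, 1 ≤ i → i ≤ n - 1 → 1 ≤ j → j ≤ n - 1 → (i + 1 < j ∨ j + 1 < i) →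
      g i * g j = g j * g i)
    (hbraid : ∀ i j, 1 ≤ i → i ≤ n - 1 → 1 ≤ j → j ≤ n - 1 → (j = i + 1 ∨ i = j + 1) →
      g i * g j * g i = g j * g i * g j)
    (htt : ∀ i j, 1 ≤ i → i ≤ n → 1 ≤ j → j ≤ n → t i * t j = t j * t i)
    (htg : ∀ i j, 1 ≤ i → i ≤ n - 1 → 1 ≤ j → j ≤ n →
      t j * g i = g i * t (Equiv.swap i (i + 1) j))
    (htd : ∀ j, 1 ≤ j → j ≤ n → t j ^ d = 1)
    (hquad : ∀ i, 1 ≤ i → i ≤ n - 1 →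
      g i ^ 2 = 1 + (u - 1) • eElt d t i - (u - 1) • (eElt d t i * g i)) :
    ∃ δ : SBMonoid n →* A,
      ∀ i, 1 ≤ i → i ≤ n - 1 →
        δ ((conGen (sbRel n)).mk' (FreeMonoid.of (SBGen.sig i))) = a • g i ∧
        δ ((conGen (sbRel n)).mk' (FreeMonoid.of (SBGen.tau i))) = pElt d t g i :=
  yh_delta_hom_general d n u a ha hd hu0 g t hgcomm hbraid htt htg htd hquad
end

section
/- The numbers x_i := -(-1)^{i(d-1)}/(d-1), for 1 ≤ i ≤ d-1 (with d ≥ 2), satisfy the E-system sum_{s=0}^{d-1} x_{m+s} x_{d-s} = x_m · sum_{s=0}^{d-1} x_s x_{d-s} (indices mod d, x_0 = x_d = 1), and for this solution ζ := (1/d) sum_{s=0}^{d-1} x_s x_{d-s} = 1/(d-1). -/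
open Finset

/-- The solution `x_i = -(-1)^(i(d-1))/(d-1)` of the E-system, extended to all of `ℕ`
periodically mod `d` with the convention `x_0 = x_d = 1`. -/
noncomputable def eSol (d : ℕ) (i : ℕ) : ℂ :=
  if i % d = 0 then 1 else -(-1 : ℂ) ^ ((i % d) * (d - 1)) / ((d : ℂ) - 1)

/-!
Write `c = 1 / (d - 1)` and `ω = (-1) ^ (d - 1)`, so that `ω ^ d = 1` and the solution is
`x_i = (1 + c) [d ∣ i] - c ω ^ i`. For any sequence `x_i = a [d ∣ i] + b ω ^ i` the convolution
`∑ₛ x_{m+s} x_{d-s}` equals `a x_m + (a + d b) b ω ^ m`: the factor `x_{d-s}` picks up `a` only at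
`s = 0`, exactly one `s < d` has `d ∣ m + s`, and `ω ^ (m + s) ω ^ (d - s) = ω ^ m`. Here
`a + d b = 1 + c - d c = 0`, so the convolution is `(1 + c) x_m = d / (d - 1) x_m` for every `m`;
at `m = 0` this gives `ζ = 1 / (d - 1)`, and the E-condition follows.
-/

section

variable {d : ℕ}

theorem neg_one_pow_pred_pow_self {M : Type*} [Monoid M] [HasDistribNeg M] :
    ((-1 : M) ^ (d - 1)) ^ d = 1 := by
  rw [← pow_mul, mul_comm]
  exact (Nat.even_mul_pred_self d).neg_one_pow

theorem Nat.dvd_add_iff_eq_val_neg [NeZero d] (m : ℕ) {s : ℕ} (hs : s < d) :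
    d ∣ m + s ↔ (-(m : ZMod d)).val = s := by
  rw [← ZMod.natCast_eq_zero_iff (m + s) d, Nat.cast_add, add_eq_zero_iff_neg_eq]
  constructor
  · intro h
    rw [h, ZMod.val_natCast_of_lt hs]
  · rintro rfl
    exact (ZMod.natCast_zmod_val (-(m : ZMod d))).symm

theorem Nat.dvd_sub_iff_eq_zero {s : ℕ} (hs : s < d) : d ∣ d - s ↔ s = 0 := by
  constructor
  · intro h
    have := Nat.le_of_dvd (by omega) h
    omega
  · rintro rfl
    simp

theorem sum_range_ite_dvd_add {M : Type*} [AddCommMonoid M] [NeZero d] (m : ℕ) (r : M) :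
    ∑ s ∈ range d, (if d ∣ m + s then r else 0) = r := by
  rw [sum_congr rfl fun s hs => if_congr (Nat.dvd_add_iff_eq_val_neg m (mem_range.1 hs)) rfl rfl,
    sum_ite_eq, if_pos (mem_range.2 (ZMod.val_lt _))]

theorem sum_range_mul_of_eq_ite_add_pow {R : Type*} [CommRing R] [NeZero d] {x : ℕ → R}
    {a b ω : R} (hω : ω ^ d = 1) (hx : ∀ i, x i = (if d ∣ i then a else 0) + b * ω ^ i)
    (m : ℕ) :
    ∑ s ∈ range d, x (m + s) * x (d - s) = a * x m + (a + d * b) * b * ω ^ m := by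
  have pow_of_dvd {i : ℕ} (h : d ∣ i) : ω ^ i = 1 := by
    obtain ⟨k, rfl⟩ := h
    rw [pow_mul, hω, one_pow]
  have term (s : ℕ) (hs : s < d) : x (m + s) * x (d - s) =
      (if s = 0 then a * x m else 0) + b * ((if d ∣ m + s then a * ω ^ m else 0) + b * ω ^ m) := by
    have hpow : ω ^ (m + s) * ω ^ (d - s) = ω ^ m := by
      rw [← pow_add, show m + s + (d - s) = m + d by omega, pow_add, hω, mul_one]
    have hleft : x (d - s) = (if s = 0 then a else 0) + b * ω ^ (d - s) := by
      simp only [hx (d - s), Nat.dvd_sub_iff_eq_zero hs]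
    have hright : x (m + s) * ω ^ (d - s) = (if d ∣ m + s then a * ω ^ m else 0) + b * ω ^ m := by
      rw [hx (m + s)]
      split_ifs with h
      · rw [← hpow, pow_of_dvd h]
        ring
      · rw [← hpow]
        ring
    rw [hleft, mul_add, mul_left_comm, hright]
    rcases eq_or_ne s 0 with rfl | h0
    · simp [mul_comm]
    · simp [h0]
  rw [sum_congr rfl fun s hs => term s (mem_range.1 hs), sum_add_distrib, sum_ite_eq',
    if_pos (mem_range.2 (Nat.pos_of_neZero d)), ← mul_sum, sum_add_distrib,
    sum_range_ite_dvd_add, sum_const, card_range, nsmul_eq_mul]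
  ring

end

theorem eSol_eq_ite_add_pow (d i : ℕ) :
    eSol d i = (if d ∣ i then 1 + ((d : ℂ) - 1)⁻¹ else 0)
      + -((d : ℂ) - 1)⁻¹ * ((-1 : ℂ) ^ (d - 1)) ^ i := by
  have hpow := pow_eq_pow_mod i (neg_one_pow_pred_pow_self (M := ℂ) (d := d))
  simp only [eSol, ← Nat.dvd_iff_mod_eq_zero]
  split_ifs with h
  · rw [hpow, Nat.mod_eq_zero_of_dvd h, pow_zero]
    ring
  · rw [hpow, ← pow_mul, mul_comm]
    ring

theorem sum_range_eSol_mul_eSol {d : ℕ} (hd : 2 ≤ d) (m : ℕ) :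
    ∑ s ∈ range d, eSol d (m + s) * eSol d (d - s) = (d : ℂ) / (d - 1) * eSol d m := by
  have : NeZero d := ⟨by omega⟩
  have hd1 : (d : ℂ) - 1 ≠ 0 := sub_ne_zero.2 (by exact_mod_cast (by omega : d ≠ 1))
  rw [sum_range_mul_of_eq_ite_add_pow neg_one_pow_pred_pow_self (eSol_eq_ite_add_pow d) m]
  field_simp
  ring

theorem esystem_special_solution (d : ℕ) (hd : 2 ≤ d) :
    (∀ m, 1 ≤ m → m ≤ d - 1 →
      ∑ s ∈ Finset.range d, eSol d (m + s) * eSol d (d - s) =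
        eSol d m * ∑ s ∈ Finset.range d, eSol d s * eSol d (d - s)) ∧
    (d : ℂ)⁻¹ * ∑ s ∈ Finset.range d, eSol d s * eSol d (d - s) = 1 / ((d : ℂ) - 1) := by
  have hx0 : eSol d 0 = 1 := by simp [eSol]
  have hzeta : ∑ s ∈ range d, eSol d s * eSol d (d - s) = (d : ℂ) / (d - 1) := by
    simpa [hx0] using sum_range_eSol_mul_eSol hd 0
  refine ⟨fun m _ _ => ?_, ?_⟩
  · rw [sum_range_eSol_mul_eSol hd, hzeta, mul_comm]
  · have hd0 : (d : ℂ) ≠ 0 := by exact_mod_cast (by omega : d ≠ 0)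
    rw [hzeta]
    field_simp
end
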